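/- Let a, e, h, g be positive integers with γ = 1, satisfying (Epema's relations) Σᵢνᵢ = a·e with 1 ≤ νᵢ ≤ a-1, 2g - 2 = a²e - Σᵢνᵢ², and the inequality (a-1)h ≤ 2(g-1) for a ≥ 2. If in addition 4a ≥ g + 4, ν₁ = … = ν_e = a - 1, and 2g - 2 = e(2a - 1) - Σ_{i=e+1}^h νᵢ² with e = Σ_{i=e+1}^h νᵢ, then h ≤ 7. -/
import Mathlib


/-- Epema's relations for a curve of genus `g` on a blow-up of an
elliptic ruled surface (`γ = 1`) with invariant `e` and multiplicities `ν₁,…,ν_h`,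
together with the Brill–Noether condition `4a ≥ g+4` and the refined relations
`ν₁ = ⋯ = ν_e = a-1`, `2g-2 = e(2a-1) - Σ_{i>e} νᵢ²`, `e = Σ_{i>e} νᵢ`,
imply `h ≤ 7`. -/
theorem stmt_7 (a g : ℤ) (e h : ℕ) (ν : ℕ → ℤ)
    (ha : 0 < a) (he : 0 < e) (hh : 0 < h) (hg : 0 < g)
    (hν : ∀ i ∈ Finset.Icc 1 h, 1 ≤ ν i ∧ ν i ≤ a - 1)
    (hsum : ∑ i ∈ Finset.Icc 1 h, ν i = a * (e : ℤ))
    (hgenus : 2 * g - 2 = a ^ 2 * (e : ℤ) - ∑ i ∈ Finset.Icc 1 h, (ν i) ^ 2)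
    (hEp : 2 ≤ a → (a - 1) * (h : ℤ) ≤ 2 * (g - 1))
    (hBN : 4 * a ≥ g + 4)
    (hνe : ∀ i ∈ Finset.Icc 1 h, i ≤ e → ν i = a - 1)
    (hgenus2 : 2 * g - 2 = (e : ℤ) * (2 * a - 1) - ∑ i ∈ Finset.Icc (e + 1) h, (ν i) ^ 2)
    (hsum2 : (e : ℤ) = ∑ i ∈ Finset.Icc (e + 1) h, ν i) :
    h ≤ 7 := by
  by_contra hc
  push_neg at hc
  have h1 : (1:ℕ) ∈ Finset.Icc 1 h := by
    simp [Finset.mem_Icc]; omega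
  obtain ⟨hν1, hν2⟩ := hν 1 h1
  have ha2 : 2 ≤ a := by linarith
  have hEp' := hEp ha2
  have hh8 : (8:ℤ) ≤ (h:ℤ) := by exact_mod_cast hc
  have : (a - 1) * 8 ≤ (a - 1) * (h:ℤ) := by
    apply mul_le_mul_of_nonneg_left hh8; linarith
  linarith
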